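/- Let C be a (2,M,q) code satisfying conditions (I) and (II), and suppose C₁, C₂ ⊆ C with |C₁| = 2, |C₂| = 3, C₁ ≠ C₂, and desc(C₁) = desc(C₂). Then there exist distinct a₁, a₂ ∈ Q and distinct b₁, b₂ ∈ Q such that C₁ = {(a₁,b₁),(a₂,b₂)} and C₂ = {(a₁,b₁),(a₂,b₂),(a₁,b₂)} (up to relabeling); in particular C₁ ⊆ C₂ and so C₁ ∩ C₂ ≠ ∅. -/

import Mathlib

/-!
Since `desc(C₁) = desc(C₂)` and `C₂ ⊆ desc(C₂)`, the three words of `C₂` lie in the grid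
`{a₁, a₂} × {b₁, b₂}` spanned by `C₁ = {(a₁, b₁), (a₂, b₂)}`; so the grid has four points and
`C₂` misses exactly one of them. If both off-diagonal corners were in `C₂`, all four corners would
lie in `C`, and the rows `a₁`, `a₂` would share the two symbols `b₁, b₂`, against (I). Hence
`C₂` is `C₁` plus one off-diagonal corner.
-/

/-- The descendant code of a sub-code of a code of length 2, viewed as a set of pairs. -/
def desc2 {q : ℕ} (C' : Finset (Fin q × Fin q)) : Set (Fin q × Fin q) :=
  {x | (∃ c ∈ C', c.1 = x.1) ∧ (∃ c ∈ C', c.2 = x.2)}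

/-- `C` is a `t`-MIPPC of length 2: for every descendant set produced by some nonempty
sub-code of size at most `t`, all such parent sets have a common codeword. -/
def isMIPPC2 {q : ℕ} (t : ℕ) (C : Finset (Fin q × Fin q)) : Prop :=
  ∀ S : Set (Fin q × Fin q),
    (∃ C' : Finset (Fin q × Fin q), C' ⊆ C ∧ C'.Nonempty ∧ C'.card ≤ t ∧ desc2 C' = S) →
    ∃ c, ∀ C' : Finset (Fin q × Fin q),
      C' ⊆ C → C'.Nonempty → C'.card ≤ t → desc2 C' = S → c ∈ C'

/-- `A¹_a = {b : (a,b) ∈ C}`. -/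
def A1 {q : ℕ} (C : Finset (Fin q × Fin q)) (a : Fin q) : Finset (Fin q) :=
  (C.filter (fun c => c.1 = a)).image Prod.snd

/-- Condition (I). -/
def CondI {q : ℕ} (C : Finset (Fin q × Fin q)) : Prop :=
  ∀ a₁ a₂ : Fin q, a₁ ≠ a₂ → (A1 C a₁ ∩ A1 C a₂).card ≤ 1

/-- Condition (II). -/
def CondII {q : ℕ} (C : Finset (Fin q × Fin q)) : Prop :=
  ¬ ∃ a₁ a₂ a₃ b₁ b₂ b₃ : Fin q,
      a₁ ≠ a₂ ∧ a₁ ≠ a₃ ∧ a₂ ≠ a₃ ∧ b₁ ≠ b₂ ∧ b₁ ≠ b₃ ∧ b₂ ≠ b₃ ∧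
      b₁ ∈ A1 C a₁ ∧ b₂ ∈ A1 C a₁ ∧ b₂ ∈ A1 C a₂ ∧ b₃ ∈ A1 C a₂ ∧
      b₁ ∈ A1 C a₃ ∧ b₃ ∈ A1 C a₃

open Finset

section Grid

variable {α β : Type*} [DecidableEq α] [DecidableEq β]

lemma ne_and_ne_of_three_le_card_product {a₁ a₂ : α} {b₁ b₂ : β}
    (h : 3 ≤ (({a₁, a₂} : Finset α) ×ˢ ({b₁, b₂} : Finset β)).card) :
    a₁ ≠ a₂ ∧ b₁ ≠ b₂ := by
  have ha := card_le_two (a := a₁) (b := a₂)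
  have hb := card_le_two (a := b₁) (b := b₂)
  rw [card_product] at h
  constructor <;> rintro rfl <;> simp only [insert_eq_of_mem, mem_singleton, card_singleton] at h
    <;> omega

lemma eq_union_of_subset_product_of_notMem {a₁ a₂ : α} {b₁ b₂ : β} {s : Finset (α × β)}
    (hs : s ⊆ ({a₁, a₂} : Finset α) ×ˢ ({b₁, b₂} : Finset β)) (hcard : s.card = 3)
    (h21 : (a₂, b₁) ∉ s) :
    s = {(a₁, b₁), (a₂, b₂)} ∪ {(a₁, b₂)} := by
  refine eq_of_subset_of_card_le (fun c hc => ?_) ?_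
  · have hc' := hs hc
    simp only [mem_product, mem_insert, mem_singleton] at hc'
    obtain ⟨c₁, c₂⟩ := c
    obtain ⟨rfl | rfl, rfl | rfl⟩ := hc' <;> simp_all
  · rw [hcard]
    exact (card_union_le _ _).trans (Nat.add_le_add card_le_two (card_singleton _).le)

end Grid

section Code

variable {q : ℕ}

lemma mem_A1 {C : Finset (Fin q × Fin q)} {a b : Fin q} : b ∈ A1 C a ↔ (a, b) ∈ C := by
  simp [A1]

lemma coe_subset_desc2 (C' : Finset (Fin q × Fin q)) : (C' : Set (Fin q × Fin q)) ⊆ desc2 C' :=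
  fun c hc => ⟨⟨c, hc, rfl⟩, ⟨c, hc, rfl⟩⟩

lemma desc2_eq_coe_product (C' : Finset (Fin q × Fin q)) :
    desc2 C' = ↑(C'.image Prod.fst ×ˢ C'.image Prod.snd) := by
  ext x
  simp [desc2]

lemma subset_product_of_desc2_eq {C₁ C₂ : Finset (Fin q × Fin q)} (h : desc2 C₁ = desc2 C₂) :
    C₂ ⊆ C₁.image Prod.fst ×ˢ C₁.image Prod.snd := by
  rw [← coe_subset, ← desc2_eq_coe_product, h]
  exact coe_subset_desc2 C₂

lemma CondI.false_of_corners_mem {C : Finset (Fin q × Fin q)} (hI : CondI C)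
    {a₁ a₂ b₁ b₂ : Fin q} (ha : a₁ ≠ a₂) (hb : b₁ ≠ b₂) (h₁₁ : (a₁, b₁) ∈ C)
    (h₁₂ : (a₁, b₂) ∈ C) (h₂₁ : (a₂, b₁) ∈ C) (h₂₂ : (a₂, b₂) ∈ C) : False := by
  have hrows : ({b₁, b₂} : Finset (Fin q)) ⊆ A1 C a₁ ∩ A1 C a₂ := by
    intro b hb'
    simp only [mem_insert, mem_singleton] at hb'
    rcases hb' with rfl | rfl <;> exact mem_inter.2 ⟨mem_A1.2 ‹_›, mem_A1.2 ‹_›⟩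
  have := card_le_card hrows
  rw [card_pair hb] at this
  have := hI a₁ a₂ ha
  omega

end Code

theorem typeI_of_card_two_three_general {q : ℕ} (C : Finset (Fin q × Fin q))
    (hI : CondI C)
    (C₁ C₂ : Finset (Fin q × Fin q)) (h₁ : C₁ ⊆ C) (h₂ : C₂ ⊆ C)
    (hc₁ : C₁.card = 2) (hc₂ : C₂.card = 3)
    (hdesc : desc2 C₁ = desc2 C₂) :
    (∃ a₁ a₂ b₁ b₂ : Fin q, a₁ ≠ a₂ ∧ b₁ ≠ b₂ ∧
      C₁ = {(a₁, b₁), (a₂, b₂)} ∧ C₂ = C₁ ∪ {(a₁, b₂)}) ∧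
    C₁ ⊆ C₂ ∧ (C₁ ∩ C₂).Nonempty := by
  have htype : ∃ a₁ a₂ b₁ b₂ : Fin q, a₁ ≠ a₂ ∧ b₁ ≠ b₂ ∧
      C₁ = {(a₁, b₁), (a₂, b₂)} ∧ C₂ = C₁ ∪ {(a₁, b₂)} := by
    obtain ⟨⟨a₁, b₁⟩, ⟨a₂, b₂⟩, -, rfl⟩ := card_eq_two.mp hc₁
    have hgrid : C₂ ⊆ ({a₁, a₂} : Finset (Fin q)) ×ˢ ({b₁, b₂} : Finset (Fin q)) := by
      simpa [image_insert] using subset_product_of_desc2_eq hdesc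
    obtain ⟨ha, hb⟩ := ne_and_ne_of_three_le_card_product (hc₂ ▸ card_le_card hgrid)
    by_cases h21 : (a₂, b₁) ∈ C₂
    · by_cases h12 : (a₁, b₂) ∈ C₂
      · exact (hI.false_of_corners_mem ha hb (h₁ (by simp)) (h₂ h12) (h₂ h21) (h₁ (by simp))).elim
      · rw [pair_comm a₁, pair_comm b₁] at hgrid
        exact ⟨a₂, a₁, b₂, b₁, ha.symm, hb.symm, pair_comm _ _,
          pair_comm (a₁, b₁) _ ▸ eq_union_of_subset_product_of_notMem hgrid hc₂ h12⟩
    · exact ⟨a₁, a₂, b₁, b₂, ha, hb, rfl, eq_union_of_subset_product_of_notMem hgrid hc₂ h21⟩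
  have hsub : C₁ ⊆ C₂ := by
    obtain ⟨_, _, _, _, -, -, -, hC₂⟩ := htype
    exact hC₂ ▸ subset_union_left
  refine ⟨htype, hsub, ?_⟩
  rw [inter_eq_left.mpr hsub, ← card_pos, hc₁]
  exact two_pos

/-- Under conditions (I) and (II), if `C₁ ⊆ C` has size 2, `C₂ ⊆ C` has size 3 and
`desc(C₁) = desc(C₂)`, then (up to relabeling) `C₁ = {(a₁,b₁),(a₂,b₂)}` and
`C₂ = C₁ ∪ {(a₁,b₂)}`; in particular `C₁ ⊆ C₂`. -/
theorem typeI_of_card_two_three {q : ℕ} (C : Finset (Fin q × Fin q))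
    (hI : CondI C) (hII : CondII C)
    (C₁ C₂ : Finset (Fin q × Fin q)) (h₁ : C₁ ⊆ C) (h₂ : C₂ ⊆ C)
    (hc₁ : C₁.card = 2) (hc₂ : C₂.card = 3) (hne : C₁ ≠ C₂)
    (hdesc : desc2 C₁ = desc2 C₂) :
    (∃ a₁ a₂ b₁ b₂ : Fin q, a₁ ≠ a₂ ∧ b₁ ≠ b₂ ∧
      C₁ = {(a₁, b₁), (a₂, b₂)} ∧ C₂ = C₁ ∪ {(a₁, b₂)}) ∧
    C₁ ⊆ C₂ ∧ (C₁ ∩ C₂).Nonempty :=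
  typeI_of_card_two_three_general C hI C₁ C₂ h₁ h₂ hc₁ hc₂ hdesc
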